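/- arXiv:1010.0796 — 2 statements merged into one kernel-verified Lean document; each statement's English description precedes it below -/
import Mathlib

section
/- With the notation of the previous context, the contrast function M satisfies the Parseval decomposition: for all β = (θ, a, υ) ∈ A_0, M(β) = ∑_{l ∈ ℤ, l ≠ 0} |c_l(f*)|² (1 − |φ(lθ − lθ*, a)|²) + (1/J)∑_{j=1}^J (υ_j* − υ_j)². -/
open Complex Real

/-!
Translating `f*` by `s` multiplies its `l`-th Fourier coefficient by `e^{ils}`, so the averaged
aligned signal `(1/J) ∑ a_j a_j* f*(· − θ_j* + θ_j)` has coefficients `φ(lθ − lθ*, a) c_l`, and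
Parseval's identity turns the second integral into `∑_l |c_l|² |φ(lθ − lθ*, a)|²`. In the first
integral the cross terms vanish because `f*` has mean `c_0 = 0`, and `∑ (a_j*)² = J` leaves
`(1/2π)∫ f*² + (1/J) ∑ (υ_j* − υ_j)²`, where `(1/2π)∫ f*² = ∑_l |c_l|²` by Parseval again.
The mode `l = 0` contributes nothing since `c_0 = 0`.
-/

open MeasureTheory Function

theorem fourier_coe_add {T : ℝ} (n : ℤ) (x y : ℝ) :
    fourier n ((x + y : ℝ) : AddCircle T)
      = fourier n (x : AddCircle T) * fourier n (y : AddCircle T) := by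
  simp only [fourier_coe_apply]
  rw [← Complex.exp_add]
  congr 1
  push_cast
  ring

theorem Function.Periodic.intervalIntegral_comp_sub_right {E : Type*} [NormedAddCommGroup E]
    [NormedSpace ℝ E] {f : ℝ → E} {T : ℝ} (hf : Periodic f T) (a s : ℝ) :
    ∫ x in a..a + T, f (x - s) = ∫ x in a..a + T, f x := by
  rw [intervalIntegral.integral_comp_sub_right, show a + T - s = a - s + T by ring,
    hf.intervalIntegral_add_eq (a - s) a]

section FourierCoeffOn

variable {E : Type*} [NormedAddCommGroup E] [NormedSpace ℂ E] {a b : ℝ} (hab : a < b)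

theorem fourierCoeffOn_comp_add {g : ℝ → E} (hg : Periodic g (b - a)) (s : ℝ) (n : ℤ) :
    fourierCoeffOn hab (fun x => g (x + s)) n
      = fourier n (s : AddCircle (b - a)) • fourierCoeffOn hab g n := by
  set h : ℝ → E := fun y => fourier (-n) (y : AddCircle (b - a)) • g y
  have hh : Periodic h (b - a) := fun y => by simp only [h, AddCircle.coe_add_period, hg y]
  have hshift (x : ℝ) : fourier (-n) (x : AddCircle (b - a)) • g (x + s)
      = fourier n (s : AddCircle (b - a)) • h (x + s) := by
    have hinv : fourier n (s : AddCircle (b - a)) * fourier (-n) (s : AddCircle (b - a)) = 1 := by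
      rw [← fourier_add, add_neg_cancel, fourier_zero]
    rw [smul_smul, fourier_coe_add]
    congr 1
    linear_combination (fourier (-n) (x : AddCircle (b - a))) * hinv.symm
  have hintegral := hh.intervalIntegral_add_eq (a + s) a
  rw [show a + s + (b - a) = b + s by ring, add_sub_cancel] at hintegral
  rw [fourierCoeffOn_eq_integral, fourierCoeffOn_eq_integral, smul_comm,
    intervalIntegral.integral_congr fun x _ => hshift x, intervalIntegral.integral_smul,
    intervalIntegral.integral_comp_add_right, hintegral]

theorem fourierCoeffOn_finset_sum {ι : Type*} (s : Finset ι) {g : ι → ℝ → E}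
    (hg : ∀ i ∈ s, IntervalIntegrable (g i) volume a b) (n : ℤ) :
    fourierCoeffOn hab (fun x => ∑ i ∈ s, g i x) n = ∑ i ∈ s, fourierCoeffOn hab (g i) n := by
  simp_rw [fourierCoeffOn_eq_integral, Finset.smul_sum]
  rw [intervalIntegral.integral_finsetSum, Finset.smul_sum]
  exact fun i hi => (hg i hi).continuousOn_smul
    ((map_continuous _).comp (AddCircle.continuous_mk' _)).continuousOn

end FourierCoeffOn

theorem hasSum_sq_fourierCoeffOn_ofReal {a b : ℝ} (hab : a < b) {g : ℝ → ℝ} (hg : Continuous g) :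
    HasSum (fun n => ‖fourierCoeffOn hab (fun x => (g x : ℂ)) n‖ ^ 2)
      ((b - a)⁻¹ * ∫ x in a..b, g x ^ 2) := by
  have hL2 : MemLp (fun x => (g x : ℂ)) 2 (volume.restrict (Set.Ioc a b)) :=
    (memLp_two_iff_integrable_sq_norm (continuous_ofReal.comp hg).aestronglyMeasurable).2
      ((continuous_ofReal.comp hg).norm.pow 2).integrableOn_Ioc
  simpa [norm_real, sq_abs] using hasSum_sq_fourierCoeffOn hab hL2

theorem fourierCoeffOn_two_pi (g : ℝ → ℂ) (n : ℤ) :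
    fourierCoeffOn two_pi_pos g n = (1 / (2 * π)) • ∫ t in 0..2 * π, g t * exp (-I * n * t) := by
  rw [fourierCoeffOn_eq_integral, sub_zero]
  congr 1
  refine intervalIntegral.integral_congr fun t _ => ?_
  rw [fourier_coe_apply, smul_eq_mul, mul_comm]
  congr 2
  field_simp
  push_cast
  ring

theorem fourierCoeffOn_two_pi_comp_add {g : ℝ → ℂ} (hg : Periodic g (2 * π)) (s : ℝ) (n : ℤ) :
    fourierCoeffOn two_pi_pos (fun t => g (t + s)) n
      = exp (I * ↑(n * s)) * fourierCoeffOn two_pi_pos g n := by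
  rw [fourierCoeffOn_comp_add two_pi_pos (by rwa [sub_zero]), fourier_coe_apply, smul_eq_mul]
  congr 2
  field_simp
  push_cast
  ring

theorem fourierCoeffOn_two_pi_sum_comp_add {ι : Type*} (s : Finset ι) {g : ℝ → ℂ}
    (hg : Continuous g) (hper : Periodic g (2 * π)) (w : ι → ℂ) (σ : ι → ℝ) (n : ℤ) :
    fourierCoeffOn two_pi_pos (fun t => ∑ i ∈ s, w i * g (t + σ i)) n
      = (∑ i ∈ s, w i * exp (I * ↑(n * σ i))) * fourierCoeffOn two_pi_pos g n := by
  rw [fourierCoeffOn_finset_sum _ _ fun i _ => Continuous.intervalIntegrable (by fun_prop) _ _,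
    Finset.sum_mul]
  refine Finset.sum_congr rfl fun i _ => ?_
  rw [fourierCoeffOn.const_mul, fourierCoeffOn_two_pi_comp_add hper, mul_assoc]

theorem fourierCoeffOn_two_pi_ofReal_mul_sum_comp_sub_add {ι : Type*} [Fintype ι] {f : ℝ → ℝ}
    (hf : Continuous f) (hper : Periodic f (2 * π)) (κ : ℝ) (w σ τ : ι → ℝ) (n : ℤ) :
    fourierCoeffOn two_pi_pos (fun t => ((κ * ∑ i, w i * f (t - σ i + τ i) : ℝ) : ℂ)) n
      = ((κ : ℂ) * ∑ i, (w i : ℂ) * exp (I * ↑(n * (τ i - σ i))))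
        * fourierCoeffOn two_pi_pos (fun t => (f t : ℂ)) n := by
  have hG : (fun t => ((κ * ∑ i, w i * f (t - σ i + τ i) : ℝ) : ℂ))
      = fun t => ∑ i, ((κ * w i : ℝ) : ℂ) * (f (t + (τ i - σ i)) : ℂ) := by
    funext t
    push_cast
    rw [Finset.mul_sum]
    refine Finset.sum_congr rfl fun i _ => ?_
    rw [show t + (τ i - σ i) = t - σ i + τ i by ring, mul_assoc]
  rw [hG, fourierCoeffOn_two_pi_sum_comp_add _ (g := fun t => (f t : ℂ)) (by fun_prop)
    (fun t => by simp only [hper t]), Finset.mul_sum]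
  push_cast
  simp only [mul_assoc]

theorem intervalIntegral_sum_sq_mul_comp_sub_add {f : ℝ → ℝ} {T : ℝ} (hf : Continuous f)
    (hper : Periodic f T) (hmean : ∫ x in 0..T, f x = 0) {ι : Type*} (s : Finset ι)
    (α θ d : ι → ℝ) :
    ∫ x in 0..T, ∑ i ∈ s, (α i * f (x - θ i) + d i) ^ 2
      = (∑ i ∈ s, α i ^ 2) * (∫ x in 0..T, f x ^ 2) + T * ∑ i ∈ s, d i ^ 2 := by
  have hshift {g : ℝ → ℝ} (hg : Periodic g T) (θ : ℝ) :
      ∫ x in 0..T, g (x - θ) = ∫ x in 0..T, g x := by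
    simpa using hg.intervalIntegral_comp_sub_right 0 θ
  have hterm (α θ d : ℝ) :
      ∫ x in 0..T, (α * f (x - θ) + d) ^ 2 = α ^ 2 * (∫ x in 0..T, f x ^ 2) + T * d ^ 2 := by
    have hexpand (x : ℝ) : (α * f (x - θ) + d) ^ 2
        = α ^ 2 * f (x - θ) ^ 2 + (2 * α * d * f (x - θ) + d ^ 2) := by ring
    have hsq : ∫ x in 0..T, f (x - θ) ^ 2 = ∫ x in 0..T, f x ^ 2 :=
      hshift (g := fun x => f x ^ 2) (fun x => by simp only [hper x]) θ
    simp_rw [hexpand]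
    rw [intervalIntegral.integral_add, intervalIntegral.integral_add,
      intervalIntegral.integral_const_mul, intervalIntegral.integral_const_mul,
      hsq, hshift hper θ, hmean, intervalIntegral.integral_const]
    · simp only [mul_zero, sub_zero, smul_eq_mul, zero_add]
    all_goals exact Continuous.intervalIntegrable (by fun_prop) _ _
  rw [intervalIntegral.integral_finsetSum fun i _ => Continuous.intervalIntegrable (by fun_prop) _ _]
  simp_rw [hterm]
  rw [Finset.sum_add_distrib, Finset.sum_mul, Finset.mul_sum]

theorem tsum_ne_zero_norm_sq_mul_one_sub_norm_sq {c φ : ℤ → ℂ} {A B : ℝ} (hc0 : c 0 = 0)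
    (hA : HasSum (fun l => ‖c l‖ ^ 2) A) (hB : HasSum (fun l => ‖φ l * c l‖ ^ 2) B) :
    ∑' l : {l : ℤ // l ≠ 0}, ‖c l‖ ^ 2 * (1 - ‖φ l‖ ^ 2) = A - B := by
  have hdiff := (hA.sub hB).congr_fun
    (g := fun l => ‖c l‖ ^ 2 * (1 - ‖φ l‖ ^ 2)) fun l => by rw [norm_mul, mul_pow]; ring
  have hsupp : support (fun l => ‖c l‖ ^ 2 * (1 - ‖φ l‖ ^ 2)) ⊆ {l | l ≠ 0} :=
    fun l hl h0 => hl (by simp [h0, hc0])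
  exact ((hasSum_subtype_iff_of_support_subset hsupp).2 hdiff).tsum_eq

theorem contrast_parseval_decomposition_general (J : ℕ) (hJ : 1 ≤ J)
    (f : ℝ → ℝ) (hf : Continuous f) (hper : Function.Periodic f (2 * Real.pi))
    (c : ℤ → ℂ)
    (hc : ∀ l : ℤ, c l = (1 / (2 * Real.pi)) •
      ∫ t in (0 : ℝ)..(2 * Real.pi), (f t : ℂ) * Complex.exp (-Complex.I * (l : ℂ) * t))
    (hc0 : c 0 = 0)
    (θstar astar υstar : Fin J → ℝ)
    (hastar : ∑ j, (astar j) ^ 2 = (J : ℝ))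
    (θ a υ : Fin J → ℝ) :
    (1 / (2 * Real.pi)) * (∫ t in (0 : ℝ)..(2 * Real.pi),
        (1 / (J : ℝ)) * ∑ j, (astar j * f (t - θstar j) + υstar j - υ j) ^ 2)
      - (1 / (2 * Real.pi)) * (∫ t in (0 : ℝ)..(2 * Real.pi),
        ((1 / (J : ℝ)) * ∑ j, a j * astar j * f (t - θstar j + θ j)) ^ 2)
    = (∑' l : {l : ℤ // l ≠ 0}, ‖c (l : ℤ)‖ ^ 2 *
        (1 - ‖(1 / (J : ℂ)) * ∑ j, (a j : ℂ) * (astar j : ℂ) *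
            Complex.exp (Complex.I * (((l : ℤ) : ℝ) * (θ j - θstar j)))‖ ^ 2))
      + (1 / (J : ℝ)) * ∑ j, (υstar j - υ j) ^ 2 := by
  have hcf : c = fourierCoeffOn two_pi_pos (fun t => (f t : ℂ)) :=
    funext fun l => by rw [hc, fourierCoeffOn_two_pi]
  have hmean : ∫ t in 0..2 * π, f t = 0 := by
    have h0 : ((∫ t in 0..2 * π, f t : ℝ) : ℂ) = 0 := by
      simpa [hc0, intervalIntegral.integral_ofReal, pi_ne_zero, eq_comm] using hc 0
    exact_mod_cast h0
  have hfirst : (1 / (2 * π)) * (∫ t in 0..2 * π,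
        (1 / (J : ℝ)) * ∑ j, (astar j * f (t - θstar j) + υstar j - υ j) ^ 2)
      = (2 * π)⁻¹ * (∫ t in 0..2 * π, f t ^ 2) + (1 / (J : ℝ)) * ∑ j, (υstar j - υ j) ^ 2 := by
    simp_rw [add_sub_assoc]
    rw [intervalIntegral.integral_const_mul,
      intervalIntegral_sum_sq_mul_comp_sub_add hf hper hmean, hastar]
    field_simp
  have hcoeff_aligned (l : ℤ) : fourierCoeffOn two_pi_pos (fun t =>
      (((1 / (J : ℝ)) * ∑ j, a j * astar j * f (t - θstar j + θ j) : ℝ) : ℂ)) l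
      = ((1 / (J : ℂ)) * ∑ j, (a j : ℂ) * (astar j : ℂ) *
          exp (I * (((l : ℤ) : ℝ) * (θ j - θstar j)))) * c l := by
    rw [fourierCoeffOn_two_pi_ofReal_mul_sum_comp_sub_add hf hper, ← hcf]
    push_cast
    rfl
  have parseval_f := hasSum_sq_fourierCoeffOn_ofReal two_pi_pos hf
  have parseval_aligned := hasSum_sq_fourierCoeffOn_ofReal two_pi_pos (by fun_prop : Continuous
    fun t => (1 / (J : ℝ)) * ∑ j, a j * astar j * f (t - θstar j + θ j))
  rw [← hcf, sub_zero] at parseval_f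
  simp only [hcoeff_aligned, sub_zero] at parseval_aligned
  rw [tsum_ne_zero_norm_sq_mul_one_sub_norm_sq hc0 parseval_f parseval_aligned, hfirst]
  ring

/-- Parseval decomposition of the contrast function:
`M(β) = ∑_{l≠0} |c_l(f*)|² (1 − |φ(lθ − lθ*, a)|²) + (1/J)∑_j (υ_j* − υ_j)²`. -/
theorem contrast_parseval_decomposition (J : ℕ) (hJ : 1 ≤ J)
    (f : ℝ → ℝ) (hf : Continuous f) (hper : Function.Periodic f (2 * Real.pi))
    (c : ℤ → ℂ)
    (hc : ∀ l : ℤ, c l = (1 / (2 * Real.pi)) •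
      ∫ t in (0 : ℝ)..(2 * Real.pi), (f t : ℂ) * Complex.exp (-Complex.I * (l : ℂ) * t))
    (hc0 : c 0 = 0)
    (hsum : Summable fun l : ℤ => ‖c l‖)
    (θstar astar υstar : Fin J → ℝ)
    (hastar : ∑ j, (astar j) ^ 2 = (J : ℝ))
    (θ a υ : Fin J → ℝ) (ha : ∑ j, (a j) ^ 2 = (J : ℝ)) :
    (1 / (2 * Real.pi)) * (∫ t in (0 : ℝ)..(2 * Real.pi),
        (1 / (J : ℝ)) * ∑ j, (astar j * f (t - θstar j) + υstar j - υ j) ^ 2)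
      - (1 / (2 * Real.pi)) * (∫ t in (0 : ℝ)..(2 * Real.pi),
        ((1 / (J : ℝ)) * ∑ j, a j * astar j * f (t - θstar j + θ j)) ^ 2)
    = (∑' l : {l : ℤ // l ≠ 0}, ‖c (l : ℤ)‖ ^ 2 *
        (1 - ‖(1 / (J : ℂ)) * ∑ j, (a j : ℂ) * (astar j : ℂ) *
            Complex.exp (Complex.I * (((l : ℤ) : ℝ) * (θ j - θstar j)))‖ ^ 2))
      + (1 / (J : ℝ)) * ∑ j, (υstar j - υ j) ^ 2 :=
  contrast_parseval_decomposition_general J hJ f hf hper c hc hc0 θstar astar υstar hastar θ a υ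
end

section
/- Let J ≥ 2, σ* > 0, a* ∈ ℝ^J with all a_j* nonzero, and let f* : ℝ → ℝ be 2π-periodic, continuously differentiable, not constant, with c_0(f*) = 0. On the space H = ℝ^{J−1} × ℝ^{J−1} × ℝ^J × ℝ × F_0 (with F_0 the continuous 2π-periodic functions of zero mean), the symmetric bilinear form ⟨h, h'⟩ defined by ⟨h,h⟩ = J h_σ²/σ*² + (1/σ*²)‖a_1* h_f − ∑_{j=2}^J h_{a,j}(a_j*/a_1*) f* + h_{υ,1}‖²_{L²} + (1/σ*²)∑_{j=2}^J ‖a_j* h_f + h_{a,j} f* − h_{θ,j} a_j* ∂f* + h_{υ,j}‖²_{L²} is positive definite, i.e., ⟨h,h⟩ = 0 implies h = 0. -/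
/-!
Every term of `⟨h, h⟩` is nonnegative, so each integrand vanishes identically. Since `f*`, `∂f*`
and `h_f` have zero mean, integrating each integrand kills the constants `h_υ`. The first
integrand then gives `h_f = c f*`, and the `j`-th one becomes
`(a_j c + h_{a,j}) f* = h_{θ,j} a_j ∂f*`; pairing with `f*` (which is orthogonal to `∂f*` and has
positive norm) gives `h_{a,j} = -c a_j`, and then `h_{θ,j} = 0` because `f*` is not constant.
Since `c a_1 = ∑ h_{a,j} a_j / a_1`, this yields `c (a_1² + ∑ a_j²) = 0`, so `c = 0`.
-/

open Function intervalIntegral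

/-- The space `F_0` of the paper, for the period `T`. -/
def periodicZeroMean (T : ℝ) : Submodule ℝ (ℝ → ℝ) where
  carrier := {g | Continuous g ∧ Periodic g T ∧ ∫ t in (0 : ℝ)..T, g t = 0}
  zero_mem' := ⟨continuous_const, fun _ => rfl, by simp⟩
  add_mem' := by
    rintro g h ⟨hgc, hgp, hg0⟩ ⟨hhc, hhp, hh0⟩
    refine ⟨hgc.add hhc, hgp.add hhp, ?_⟩
    simp only [Pi.add_apply]
    rw [integral_add (hgc.intervalIntegrable _ _) (hhc.intervalIntegrable _ _), hg0, hh0,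
      add_zero]
  smul_mem' := by
    rintro c g ⟨hgc, hgp, hg0⟩
    refine ⟨hgc.const_smul c, hgp.smul c, ?_⟩
    simp only [Pi.smul_apply, smul_eq_mul, integral_const_mul, hg0, mul_zero]

section

variable {T : ℝ} {f f' g : ℝ → ℝ}

theorem Function.Periodic.intervalIntegral_sq_pos (hT : 0 < T) (hg : Continuous g)
    (hp : Periodic g T) (hne : g ≠ 0) : 0 < ∫ t in (0 : ℝ)..T, g t ^ 2 := by
  obtain ⟨t, ht⟩ : ∃ t, g t ≠ 0 := by simpa [funext_iff] using hne
  obtain ⟨y, hy, hgy⟩ := hp.exists_mem_Ico₀ hT t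
  exact integral_pos hT (hg.pow 2).continuousOn (fun _ _ => sq_nonneg _)
    ⟨y, Set.Ico_subset_Icc_self hy, by rw [← hgy]; positivity⟩

theorem Function.Periodic.eq_zero_of_intervalIntegral_sq_eq_zero (hT : 0 < T)
    (hg : Continuous g) (hp : Periodic g T) (h : ∫ t in (0 : ℝ)..T, g t ^ 2 = 0) : g = 0 := by
  by_contra hne
  exact (hp.intervalIntegral_sq_pos hT hg hne).ne' h

theorem eq_zero_of_intervalIntegral_sq_add_const_eq_zero (hT : 0 < T)
    (hg : g ∈ periodicZeroMean T) {c : ℝ} (h : ∫ t in (0 : ℝ)..T, (g t + c) ^ 2 = 0) :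
    g = 0 ∧ c = 0 := by
  obtain ⟨hgc, hgp, hg0⟩ := hg
  have hsum : (fun t => g t + c) = 0 :=
    Periodic.eq_zero_of_intervalIntegral_sq_eq_zero hT (hgc.add continuous_const)
      (fun t => by simp only [hgp t]) h
  have hg : g = fun _ => -c := funext fun t => eq_neg_of_add_eq_zero_left (congrFun hsum t)
  have hc : c = 0 := by
    rw [hg, integral_const, smul_eq_mul, sub_zero] at hg0
    simpa [hT.ne'] using hg0
  exact ⟨funext fun t => by simp [hg, hc], hc⟩

theorem Function.Periodic.periodic_of_hasDerivAt (hper : Periodic f T)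
    (hderiv : ∀ t, HasDerivAt f (f' t) t) : Periodic f' T := fun t => by
  have h := (hderiv (t + T)).comp_add_const t T
  rw [show (fun x => f (x + T)) = f from funext hper] at h
  exact h.unique (hderiv t)

theorem Function.Periodic.intervalIntegral_eq_zero_of_hasDerivAt (hper : Periodic f T)
    (hderiv : ∀ t, HasDerivAt f (f' t) t) (hint : IntervalIntegrable f' MeasureTheory.volume 0 T) :
    ∫ t in (0 : ℝ)..T, f' t = 0 := by
  rw [integral_eq_sub_of_hasDerivAt (fun t _ => hderiv t) hint, ← zero_add T, hper 0, sub_self]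

theorem deriv_mem_periodicZeroMean (hper : Periodic f T) (hderiv : ∀ t, HasDerivAt f (f' t) t)
    (hf' : Continuous f') : f' ∈ periodicZeroMean T :=
  ⟨hf', hper.periodic_of_hasDerivAt hderiv,
    hper.intervalIntegral_eq_zero_of_hasDerivAt hderiv (hf'.intervalIntegrable _ _)⟩

/-- Multiply by `f` and integrate: `∫ f f' = 0` by periodicity, while `∫ f² > 0`. -/
theorem eq_zero_of_mul_eq_mul_deriv (hT : 0 < T) (hper : Periodic f T)
    (hderiv : ∀ t, HasDerivAt f (f' t) t) (hf' : Continuous f') (hnonconst : ∃ s t, f s ≠ f t)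
    {α β : ℝ} (h : ∀ t, α * f t = β * f' t) : α = 0 ∧ β = 0 := by
  have hfc : Continuous f := Differentiable.continuous fun t => (hderiv t).differentiableAt
  obtain ⟨s, t, hst⟩ := hnonconst
  have hf0 : f ≠ 0 := fun h0 => hst (by simp [h0])
  have hff' : ∫ t in (0 : ℝ)..T, f t * f' t = 0 := by
    refine Periodic.intervalIntegral_eq_zero_of_hasDerivAt (f := fun t => f t * f t / 2)
      (fun t => by simp only [hper t]) (fun t => ?_) ((hfc.mul hf').intervalIntegrable _ _)
    exact (((hderiv t).fun_mul (hderiv t)).div_const 2).congr_deriv (by ring)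
  have hα : α = 0 := by
    have hint : α * ∫ t in (0 : ℝ)..T, f t ^ 2 = β * ∫ t in (0 : ℝ)..T, f t * f' t := by
      rw [← integral_const_mul, ← integral_const_mul]
      exact integral_congr fun t _ => by linear_combination f t * h t
    rw [hff', mul_zero] at hint
    exact (mul_eq_zero.1 hint).resolve_right (hper.intervalIntegral_sq_pos hT hfc hf0).ne'
  refine ⟨hα, ?_⟩
  by_contra hβ
  refine hst (is_const_of_deriv_eq_zero (fun x => (hderiv x).differentiableAt) (fun x => ?_) s t)
  rw [(hderiv x).deriv]
  simpa [hα, hβ] using (h x).symm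

theorem eq_smul_of_intervalIntegral_sq_eq_zero (hT : 0 < T) (hf : f ∈ periodicZeroMean T)
    (hg : g ∈ periodicZeroMean T) {a b υ : ℝ} (ha : a ≠ 0)
    (h : ∫ t in (0 : ℝ)..T, (a * g t - b * f t + υ) ^ 2 = 0) : g = (b / a) • f ∧ υ = 0 := by
  obtain ⟨hzero, hυ⟩ := eq_zero_of_intervalIntegral_sq_add_const_eq_zero hT
    (Submodule.sub_mem _ (Submodule.smul_mem _ a hg) (Submodule.smul_mem _ b hf)) h
  refine ⟨funext fun t => ?_, hυ⟩
  have ht : a * g t - b * f t = 0 := congrFun hzero t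
  simp only [Pi.smul_apply, smul_eq_mul]
  field_simp
  linear_combination ht

theorem eq_zero_of_intervalIntegral_sq_eq_zero_of_eq_smul (hT : 0 < T) (hper : Periodic f T)
    (hderiv : ∀ t, HasDerivAt f (f' t) t) (hf' : Continuous f') (hnonconst : ∃ s t, f s ≠ f t)
    (hf : f ∈ periodicZeroMean T) {a b c θ υ : ℝ} (ha : a ≠ 0) (hg : g = c • f)
    (h : ∫ t in (0 : ℝ)..T, (a * g t + b * f t - θ * a * f' t + υ) ^ 2 = 0) :
    a * c + b = 0 ∧ θ = 0 ∧ υ = 0 := by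
  subst hg
  obtain ⟨hzero, hυ⟩ := eq_zero_of_intervalIntegral_sq_add_const_eq_zero hT
    (Submodule.sub_mem _ (Submodule.smul_mem _ (a * c + b) hf)
      (Submodule.smul_mem _ (θ * a) (deriv_mem_periodicZeroMean hper hderiv hf')))
    (c := υ) (by simpa only [Pi.sub_apply, Pi.smul_apply, smul_eq_mul, add_mul, mul_assoc,
      add_sub_assoc] using h)
  obtain ⟨hb, hθa⟩ := eq_zero_of_mul_eq_mul_deriv hT hper hderiv hf' hnonconst (α := a * c + b)
    (β := θ * a) fun t => sub_eq_zero.1 (congrFun hzero t)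
  exact ⟨hb, (mul_eq_zero.1 hθa).resolve_right ha, hυ⟩

end

theorem eq_zero_of_forall_mul_add_eq_zero {ι : Type*} {s : Finset ι} {a b : ι → ℝ} {a₀ c : ℝ}
    (ha₀ : a₀ ≠ 0) (hb : ∀ j ∈ s, a j * c + b j = 0)
    (hc : c = (∑ j ∈ s, b j * (a j / a₀)) / a₀) : c = 0 := by
  have hsum : ∑ j ∈ s, b j * (a j / a₀) = -(c / a₀) * ∑ j ∈ s, a j ^ 2 := by
    rw [Finset.mul_sum]
    exact Finset.sum_congr rfl fun j hj => by
      rw [eq_neg_of_add_eq_zero_right (hb j hj)]; field_simp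
  have hpos : 0 < a₀ ^ 2 + ∑ j ∈ s, a j ^ 2 := by positivity
  have hzero : c * (a₀ ^ 2 + ∑ j ∈ s, a j ^ 2) = 0 := by
    rw [hsum] at hc
    field_simp at hc
    linear_combination hc
  exact (mul_eq_zero.1 hzero).resolve_right hpos.ne'

theorem eq_zero_of_mul_sq_div_add_add_sum_eq_zero {ι : Type*} (s : Finset ι) {n σ x B : ℝ}
    {C : ι → ℝ} (hn : 0 < n) (hσ : σ ≠ 0) (hB : 0 ≤ B) (hC : ∀ j ∈ s, 0 ≤ C j)
    (h : n * x ^ 2 / σ ^ 2 + 1 / σ ^ 2 * B + 1 / σ ^ 2 * ∑ j ∈ s, C j = 0) :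
    x = 0 ∧ B = 0 ∧ ∀ j ∈ s, C j = 0 := by
  have hsum : n * x ^ 2 + B + ∑ j ∈ s, C j = 0 := by
    field_simp at h
    simpa using h
  rw [add_eq_zero_iff_of_nonneg (by positivity) (Finset.sum_nonneg hC),
    add_eq_zero_iff_of_nonneg (by positivity) hB, Finset.sum_eq_zero_iff_of_nonneg hC] at hsum
  obtain ⟨⟨hx, hB⟩, hC⟩ := hsum
  exact ⟨pow_eq_zero_iff two_ne_zero |>.1 ((mul_eq_zero.1 hx).resolve_left hn.ne'), hB, hC⟩

theorem Pi.eq_zero_of_sdiff_singleton {ι M : Type*} [Fintype ι] [DecidableEq ι]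
    [Zero M] {v : ι → M} (i : ι) (hi : v i = 0) (h : ∀ j ∈ Finset.univ \ {i}, v j = 0) :
    v = 0 := by
  funext j
  by_cases hj : j = i
  · rw [hj, hi, Pi.zero_apply]
  · exact h j (by simpa using hj)

/-- The inner product of the tangent space of the shape invariant model is
positive definite: `⟨h,h⟩ = 0` implies `h = 0`. -/
theorem tangent_inner_product_definite (J : ℕ) (hJ : 2 ≤ J)
    (σstar : ℝ) (hσstar : 0 < σstar)
    (astar : Fin J → ℝ) (hastar : ∀ j, astar j ≠ 0)
    (f f' : ℝ → ℝ) (hderiv : ∀ t, HasDerivAt f (f' t) t) (hf' : Continuous f')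
    (hper : Function.Periodic f (2 * Real.pi))
    (hmean : (∫ t in (0 : ℝ)..(2 * Real.pi), f t) = 0)
    (hnonconst : ∃ s t : ℝ, f s ≠ f t)
    (hθ ha hυ : Fin J → ℝ) (hθ0 : hθ ⟨0, by omega⟩ = 0) (ha0 : ha ⟨0, by omega⟩ = 0)
    (hσ : ℝ) (hfdir : ℝ → ℝ) (hfc : Continuous hfdir)
    (hfper : Function.Periodic hfdir (2 * Real.pi))
    (hfmean : (∫ t in (0 : ℝ)..(2 * Real.pi), hfdir t) = 0)
    (hzero :
      (J : ℝ) * hσ ^ 2 / σstar ^ 2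
      + (1 / σstar ^ 2) * (∫ t in (0 : ℝ)..(2 * Real.pi),
          (astar ⟨0, by omega⟩ * hfdir t
            - (∑ j ∈ Finset.univ \ {(⟨0, by omega⟩ : Fin J)}, ha j * (astar j / astar ⟨0, by omega⟩) * f t)
            + hυ ⟨0, by omega⟩) ^ 2)
      + (1 / σstar ^ 2) * ∑ j ∈ Finset.univ \ {(⟨0, by omega⟩ : Fin J)},
          ∫ t in (0 : ℝ)..(2 * Real.pi),
            (astar j * hfdir t + ha j * f t - hθ j * astar j * f' t + hυ j) ^ 2
      = 0) :
    hσ = 0 ∧ hθ = 0 ∧ ha = 0 ∧ hυ = 0 ∧ ∀ t, hfdir t = 0 := by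
  have hT : 0 < 2 * Real.pi := by positivity
  set j₀ : Fin J := ⟨0, by omega⟩
  have hf_cont : Continuous f := Differentiable.continuous fun t => (hderiv t).differentiableAt
  have hf : f ∈ periodicZeroMean (2 * Real.pi) := ⟨hf_cont, hper, hmean⟩
  obtain ⟨hσ0, h₀, hIj⟩ := eq_zero_of_mul_sq_div_add_add_sum_eq_zero _ (by norm_cast; omega)
    hσstar.ne' (integral_nonneg hT.le fun _ _ => sq_nonneg _)
    (fun _ _ => integral_nonneg hT.le fun _ _ => sq_nonneg _) hzero
  obtain ⟨hh, hυ₀⟩ := eq_smul_of_intervalIntegral_sq_eq_zero hT hf ⟨hfc, hfper, hfmean⟩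
    (hastar j₀) (by simpa only [← Finset.sum_mul] using h₀)
  have hchannels := fun j hj => eq_zero_of_intervalIntegral_sq_eq_zero_of_eq_smul hT hper
    hderiv hf' hnonconst hf (hastar j) hh (hIj j hj)
  have hc := eq_zero_of_forall_mul_add_eq_zero (hastar j₀) (fun j hj => (hchannels j hj).1) rfl
  refine ⟨hσ0, Pi.eq_zero_of_sdiff_singleton j₀ hθ0 fun j hj => (hchannels j hj).2.1,
    Pi.eq_zero_of_sdiff_singleton j₀ ha0 fun j hj => ?_,
    Pi.eq_zero_of_sdiff_singleton j₀ hυ₀ fun j hj => (hchannels j hj).2.2,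
    fun t => by rw [hh, hc, zero_smul, Pi.zero_apply]⟩
  simpa only [hc, mul_zero, zero_add] using (hchannels j hj).1
end
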